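/- For each 𝓗 > 0, the set of monic polynomials f ∈ O_k[X] of degree e with M^k(f) ≤ 𝓗 is finite. -/

import Mathlib

open Polynomial

/-- The Mahler measure of a complex polynomial. -/
noncomputable def mahlerMeasure (f : Polynomial ℂ) : ℝ :=
  ‖f.leadingCoeff‖ * (f.roots.map fun z => max 1 ‖z‖).prod

/-- The field Mahler measure `M^k(f) = ∏_{i=1}^{r+s} M(σᵢ f)^{dᵢ/m}`; equivalently (since
complex conjugate embeddings give the same Mahler measure) the product over all `m`
embeddings `φ : k →+* ℂ` of `M(φ f)^{1/m}`. -/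
noncomputable def Mk (k : Type*) [Field k] [CharZero k] (f : Polynomial k) : ℝ :=
  ∏ᶠ φ : k →+* ℂ, _root_.mahlerMeasure (f.map φ) ^ ((1 : ℝ) / Module.finrank ℚ k)

/-!
For a monic `f`, every factor `M(φ f)` of `M^k(f)^m = ∏_φ M(φ f)` is at least `1`, so
`M^k(f) ≤ 𝓗` bounds each `M(φ f)` by `𝓗^m`, and hence every conjugate of every coefficient of `f`
by `2^e 𝓗^m`. Algebraic integers of `k` with all conjugates bounded form a finite set, and a
polynomial of degree `e` is determined by its first `e + 1` coefficients.
-/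

theorem Polynomial.finite_setOf_natDegree_le_of_coeff_mem {R : Type*} [Semiring R] {S : Set R}
    (hS : S.Finite) (n : ℕ) : {p : R[X] | p.natDegree ≤ n ∧ ∀ i, p.coeff i ∈ S}.Finite := by
  let coeffs : R[X] → Fin (n + 1) → R := fun p i => p.coeff i
  refine Set.Finite.of_finite_image (f := coeffs) ((Set.Finite.pi fun _ => hS).subset ?_) ?_
  · rintro _ ⟨p, ⟨-, hp⟩, rfl⟩ i -
    exact hp i
  · rintro p ⟨hp, -⟩ q ⟨hq, -⟩ hpq
    refine (ext_iff_natDegree_le hp hq).2 fun i hi => ?_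
    exact congrFun hpq ⟨i, Nat.lt_succ_of_le hi⟩

theorem mahlerMeasure_eq_polynomial_mahlerMeasure (p : ℂ[X]) :
    _root_.mahlerMeasure p = p.mahlerMeasure :=
  (Polynomial.mahlerMeasure_eq_leadingCoeff_mul_prod_roots p).symm

theorem mahlerMeasure_nonneg (p : ℂ[X]) : 0 ≤ _root_.mahlerMeasure p := by
  rw [mahlerMeasure_eq_polynomial_mahlerMeasure]
  exact Polynomial.mahlerMeasure_nonneg p

theorem Polynomial.Monic.one_le_mahlerMeasure {p : ℂ[X]} (hp : p.Monic) :
    1 ≤ _root_.mahlerMeasure p := by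
  rw [mahlerMeasure_eq_polynomial_mahlerMeasure]
  exact one_le_mahlerMeasure_of_one_le_norm_leadingCoeff (by simp [hp.leadingCoeff])

theorem norm_coeff_le_two_pow_mul_mahlerMeasure (p : ℂ[X]) (i : ℕ) :
    ‖p.coeff i‖ ≤ 2 ^ p.natDegree * _root_.mahlerMeasure p := by
  refine (norm_coeff_le_choose_mul_mahlerMeasure i p).trans ?_
  rw [mahlerMeasure_eq_polynomial_mahlerMeasure]
  gcongr
  · exact Polynomial.mahlerMeasure_nonneg p
  · exact_mod_cast Nat.choose_le_two_pow _ _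

section NumberField

variable {k : Type*} [Field k] [NumberField k]

theorem Mk_nonneg (f : k[X]) : 0 ≤ Mk k f :=
  finprod_nonneg fun _ => Real.rpow_nonneg (_root_.mahlerMeasure_nonneg _) _

theorem Mk_pow_finrank (f : k[X]) :
    Mk k f ^ Module.finrank ℚ k = ∏ φ : k →+* ℂ, _root_.mahlerMeasure (f.map φ) := by
  rw [Mk, finprod_eq_prod_of_fintype, ← Finset.prod_pow]
  refine Finset.prod_congr rfl fun φ _ => ?_
  rw [one_div]
  exact Real.rpow_inv_natCast_pow (_root_.mahlerMeasure_nonneg _) Module.finrank_pos.ne'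

theorem Polynomial.Monic.mahlerMeasure_map_le_Mk_pow {f : k[X]} (hf : f.Monic) (φ : k →+* ℂ) :
    _root_.mahlerMeasure (f.map φ) ≤ Mk k f ^ Module.finrank ℚ k := by
  rw [Mk_pow_finrank]
  exact Multiset.mem_le_prod_of_one_le (fun ψ => (hf.map ψ).one_le_mahlerMeasure)
    (Finset.mem_univ φ)

theorem Polynomial.Monic.norm_coeff_map_le_of_Mk_le {f : k[X]} (hf : f.Monic) {H : ℝ}
    (hH : Mk k f ≤ H) (φ : k →+* ℂ) (i : ℕ) :
    ‖φ (f.coeff i)‖ ≤ 2 ^ f.natDegree * H ^ Module.finrank ℚ k := by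
  calc ‖φ (f.coeff i)‖ ≤ 2 ^ f.natDegree * _root_.mahlerMeasure (f.map φ) := by
        rw [← coeff_map, ← hf.natDegree_map φ]
        exact norm_coeff_le_two_pow_mul_mahlerMeasure (f.map φ) i
    _ ≤ 2 ^ f.natDegree * Mk k f ^ Module.finrank ℚ k := by
        gcongr
        exact hf.mahlerMeasure_map_le_Mk_pow φ
    _ ≤ 2 ^ f.natDegree * H ^ Module.finrank ℚ k := by
        gcongr
        exact Mk_nonneg f

end NumberField

theorem finite_monic_polys_general (k : IntermediateField ℚ ℂ) [NumberField k] (e : ℕ)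
    (𝓗 : ℝ) :
    {f : Polynomial k | f.Monic ∧ (∀ i, IsIntegral ℤ (f.coeff i)) ∧
      f.natDegree = e ∧ Mk k f ≤ 𝓗}.Finite := by
  have hS := NumberField.Embeddings.finite_of_norm_le k ℂ (2 ^ e * 𝓗 ^ Module.finrank ℚ k)
  refine (Polynomial.finite_setOf_natDegree_le_of_coeff_mem hS e).subset ?_
  rintro f ⟨hmonic, hint, rfl, hH⟩
  exact ⟨le_rfl, fun i => ⟨hint i, fun φ => hmonic.norm_coeff_map_le_of_Mk_le hH φ i⟩⟩

/-- For each `𝓗 > 0`, the set of monic polynomials `f ∈ O_k[X]` of degree `e` with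
`M^k(f) ≤ 𝓗` is finite. -/
theorem finite_monic_polys (k : IntermediateField ℚ ℂ) [NumberField k] (e : ℕ)
    (𝓗 : ℝ) (h𝓗 : 0 < 𝓗) :
    {f : Polynomial k | f.Monic ∧ (∀ i, IsIntegral ℤ (f.coeff i)) ∧
      f.natDegree = e ∧ Mk k f ≤ 𝓗}.Finite :=
  finite_monic_polys_general k e 𝓗
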